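/- The underlying-set square is not a pullback: the map P → A ×_C B induced by (πₐ, π_b) on underlying sets is not injective, where P = ℕ⁴, A = B = ℕ², C = ℕ with the homomorphisms above. -/

import Mathlib

/-- `πₐ : ℕ⁴ → ℕ²`, sending the generator `⟨aᵢ, bⱼ⟩` to `aᵢ`. -/
def projA : (ℕ × ℕ) × (ℕ × ℕ) →+ ℕ × ℕ where
  toFun p := (p.1.1 + p.1.2, p.2.1 + p.2.2)
  map_zero' := rfl
  map_add' := by intro a b; simp [Prod.ext_iff]; omega

/-- `π_b : ℕ⁴ → ℕ²`, sending the generator `⟨aᵢ, bⱼ⟩` to `bⱼ`. -/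
def projB : (ℕ × ℕ) × (ℕ × ℕ) →+ ℕ × ℕ where
  toFun p := (p.1.1 + p.2.1, p.1.2 + p.2.2)
  map_zero' := rfl
  map_add' := by intro a b; simp [Prod.ext_iff]; omega

/-- `α = β : ℕ² → ℕ`, sending both generators to the generator of `C = ℕ`. -/
def toC : ℕ × ℕ →+ ℕ where
  toFun p := p.1 + p.2
  map_zero' := rfl
  map_add' := by intro a b; simp; omega

/-- On underlying sets, the induced map `P → A ×_C B` into the set-theoretic
pullback `{(x, y) | α x = β y}` is not injective. -/
theorem underlying_map_to_pullback_not_injective :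
    ¬ Function.Injective
        (fun p : (ℕ × ℕ) × (ℕ × ℕ) =>
          (⟨(projA p, projB p), by simp [projA, projB, toC]; omega⟩ :
            {q : (ℕ × ℕ) × (ℕ × ℕ) // toC q.1 = toC q.2})) := by
  intro h
  -- ⟨a₁, b₁⟩ + ⟨a₂, b₂⟩ and ⟨a₁, b₂⟩ + ⟨a₂, b₁⟩ have the same projections.
  exact absurd (h (a₁ := ((1, 0), (0, 1))) (a₂ := ((0, 1), (1, 0))) rfl) (by decide)
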